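/- A graph G is square-stable if and only if for every maximum stable set S₁ of G and every maximum stable set S₂ of G², the induced subgraph G[S₁ △ S₂] on the symmetric difference has a perfect matching. -/

import Mathlib

/-!
Let `S₁ ∈ Ω(G)`, `S₂ ∈ Ω(G²)`, `A = S₁ \ S₂` and `B = S₂ \ S₁`; both `A` and `B` are stable in `G`.
By maximality of `S₁` every `b ∈ B` has a neighbour in `S₁`, necessarily in `A`, and since `S₂`
is stable in `G²` no vertex of `A` has two neighbours in `B`. So choosing a neighbour defines an
injection `B → A` along edges, which is a bijection, hence a perfect matching of `G[A ∪ B]`,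
exactly when `|A| = |B|`, i.e. when `α(G) = α(G²)`. Conversely a perfect matching of `G[A ∪ B]`
pairs the two stable sets `A` and `B` with each other, forcing `|A| = |B|`.
-/

open SimpleGraph

attribute [local instance] Classical.propDecidable

variable {V : Type*}

/-- A stable (independent) set: pairwise non-adjacent vertices. -/
def IsStable (G : SimpleGraph V) (S : Finset V) : Prop :=
  ∀ ⦃a⦄, a ∈ S → ∀ ⦃b⦄, b ∈ S → ¬ G.Adj a b

/-- The stability (independence) number α(G). -/
noncomputable def alpha [Fintype V] (G : SimpleGraph V) : ℕ :=
  (Finset.univ.powerset.filter (fun S => IsStable G S)).sup Finset.card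

/-- A maximum stable set, i.e. a member of Ω(G). -/
def IsMaxStable [Fintype V] (G : SimpleGraph V) (S : Finset V) : Prop :=
  IsStable G S ∧ S.card = alpha G

/-- The square G² of a graph: distinct vertices adjacent iff at distance ≤ 2. -/
def square (G : SimpleGraph V) : SimpleGraph V where
  Adj u v := u ≠ v ∧ (G.Adj u v ∨ ∃ w, G.Adj u w ∧ G.Adj w v)
  symm := by
    refine ⟨?_⟩
    rintro u v ⟨h, h2⟩
    refine ⟨h.symm, ?_⟩
    rcases h2 with h2 | ⟨w, hw1, hw2⟩
    · exact Or.inl h2.symm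
    · exact Or.inr ⟨w, hw2.symm, hw1.symm⟩
  loopless := by refine ⟨?_⟩; rintro u ⟨h, _⟩; exact h rfl

/-- G is α-square-stable if α(G) = α(G²). -/
def SquareStable [Fintype V] (G : SimpleGraph V) : Prop :=
  alpha G = alpha (square G)

/-- The maximum matching size μ(G). -/
noncomputable def mu [Fintype V] (G : SimpleGraph V) : ℕ :=
  sSup {n | ∃ M : G.Subgraph, M.IsMatching ∧ M.verts.ncard = 2 * n}

/-- f realizes a matching of A into S: it sends each a ∈ A to a distinct
neighbour in S (so the corresponding edges form a matching ⊆ (A,S) saturating A). -/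
def MatchedInto (G : SimpleGraph V) (A S : Finset V) (f : V → V) : Prop :=
  (∀ a ∈ A, f a ∈ S ∧ G.Adj a (f a)) ∧ ∀ a ∈ A, ∀ b ∈ A, f a = f b → a = b

/-- Well-covered: no isolated vertices, and every maximal stable set is maximum. -/
def WellCovered [Fintype V] (G : SimpleGraph V) : Prop :=
  (∀ v : V, ∃ w, G.Adj v w) ∧
    ∀ S : Finset V, IsStable G S → (∀ T : Finset V, IsStable G T → S ⊆ T → S = T) →
      S.card = alpha G

/-- Very well-covered: well-covered and |V(G)| = 2α(G). -/
def VeryWellCovered [Fintype V] (G : SimpleGraph V) : Prop :=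
  WellCovered G ∧ Fintype.card V = 2 * alpha G

/-- The set of pendant (degree-one) vertices of G. -/
noncomputable def pendants [Fintype V] (G : SimpleGraph V) : Finset V :=
  Finset.univ.filter (fun v => G.degree v = 1)

/-- G has a perfect matching consisting of pendant edges. -/
def HasPendantPerfectMatching [Fintype V] (G : SimpleGraph V) : Prop :=
  ∃ M : G.Subgraph, M.IsPerfectMatching ∧
    ∀ a b : V, M.Adj a b → G.degree a = 1 ∨ G.degree b = 1

/-- The star K_{1,n}: vertex 0 is the center, adjacent to n leaves. -/
def starGraph (n : ℕ) : SimpleGraph (Fin (n + 1)) where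
  Adj u v := u ≠ v ∧ (u = 0 ∨ v = 0)
  symm := by refine ⟨?_⟩; rintro u v ⟨h1, h2⟩; exact ⟨h1.symm, h2.symm⟩
  loopless := by refine ⟨?_⟩; rintro u ⟨h, _⟩; exact h rfl

open Finset

variable {G : SimpleGraph V}

lemma IsStable.mono {S T : Finset V} (hT : IsStable G T) (hST : S ⊆ T) : IsStable G S :=
  fun _ ha _ hb => hT (hST ha) (hST hb)

lemma IsStable.of_square {S : Finset V} (h : IsStable (square G) S) : IsStable G S :=
  fun _ ha _ hb hadj => h ha hb ⟨G.ne_of_adj hadj, Or.inl hadj⟩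

lemma IsStable.eq_of_square_of_adj {S : Finset V} (h : IsStable (square G) S) {a b₁ b₂ : V}
    (hb₁ : b₁ ∈ S) (hb₂ : b₂ ∈ S) (h₁ : G.Adj a b₁) (h₂ : G.Adj a b₂) : b₁ = b₂ := by
  by_contra hne
  exact h hb₁ hb₂ ⟨hne, Or.inr ⟨a, h₁.symm, h₂⟩⟩

section Fintype

variable [Fintype V]

lemma IsStable.card_le_alpha {S : Finset V} (h : IsStable G S) : S.card ≤ alpha G :=
  le_sup (mem_filter.mpr ⟨mem_powerset.mpr (subset_univ S), h⟩)

lemma exists_isMaxStable (G : SimpleGraph V) : ∃ S, IsMaxStable G S := by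
  obtain ⟨S, hS, hcard⟩ := exists_mem_eq_sup
    (univ.powerset.filter (fun S => IsStable G S)) ⟨∅, by simp [IsStable]⟩ card
  exact ⟨S, (mem_filter.mp hS).2, hcard.symm⟩

lemma IsMaxStable.exists_adj [DecidableEq V] {S : Finset V} (hS : IsMaxStable G S) {b : V}
    (hb : b ∉ S) : ∃ a ∈ S, G.Adj a b := by
  by_contra! hno
  have hstable : IsStable G (insert b S) := by
    intro x hx y hy hxy
    rcases mem_insert.mp hx with hxb | hxS <;> rcases mem_insert.mp hy with hyb | hyS
    · exact G.loopless.irrefl x (hyb.trans hxb.symm ▸ hxy)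
    · exact hno y hyS (hxb ▸ hxy.symm)
    · exact hno x hxS (hyb ▸ hxy)
    · exact hS.1 hxS hyS hxy
  have := hstable.card_le_alpha
  rw [card_insert_of_notMem hb, hS.2] at this
  omega

lemma exists_matchedInto_sdiff [DecidableEq V] {S₁ S₂ : Finset V}
    (hS₁ : IsMaxStable G S₁) (hS₂ : IsStable (square G) S₂) :
    ∃ g, MatchedInto G (S₂ \ S₁) (S₁ \ S₂) g := by
  have hnbr : ∀ b ∈ S₂ \ S₁, ∃ a, a ∈ S₁ \ S₂ ∧ G.Adj b a := by
    intro b hb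
    obtain ⟨a, ha, hab⟩ := hS₁.exists_adj (mem_sdiff.mp hb).2
    have haS₂ : a ∉ S₂ := fun haS₂ => hS₂.of_square haS₂ (mem_sdiff.mp hb).1 hab
    exact ⟨a, mem_sdiff.mpr ⟨ha, haS₂⟩, hab.symm⟩
  choose! g hg using hnbr
  refine ⟨g, hg, fun b₁ hb₁ b₂ hb₂ heq => ?_⟩
  exact hS₂.eq_of_square_of_adj (mem_sdiff.mp hb₁).1 (mem_sdiff.mp hb₂).1
    (hg b₁ hb₁).2.symm (heq ▸ (hg b₂ hb₂).2.symm)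

end Fintype

lemma MatchedInto.exists_isMatching [DecidableEq V] {A S : Finset V} {f : V → V}
    (hf : MatchedInto G A S f) (hAS : Disjoint A S) (hcard : S.card ≤ A.card) :
    ∃ M : G.Subgraph, M.IsMatching ∧ M.verts = ↑(A ∪ S) := by
  let g : ↥(A : Set V) → ↥(S : Set V) := fun a => ⟨f a, (hf.1 a a.2).1⟩
  have hg : g.Bijective := by
    refine (Fintype.bijective_iff_injective_and_card g).mpr ⟨fun a b hab => ?_, ?_⟩
    · exact Subtype.ext (hf.2 a a.2 b b.2 (congrArg Subtype.val hab))
    · simpa using le_antisymm (card_le_card_of_injOn f (fun a ha => (hf.1 a ha).1)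
        (fun a ha b hb => hf.2 a ha b hb)) hcard
  obtain ⟨M, hMv, hM⟩ := Subgraph.IsMatching.exists_of_disjoint_sets_of_equiv
    (disjoint_coe.mpr hAS) (Equiv.ofBijective g hg) (fun a => (hf.1 a a.2).2)
  exact ⟨M, hM, by rw [hMv, coe_union]⟩

lemma SimpleGraph.Subgraph.IsMatching.card_le_of_verts_eq_union [DecidableEq V] {M : G.Subgraph}
    (hM : M.IsMatching) {X Y : Finset V} (hv : M.verts = ↑(X ∪ Y)) (hX : IsStable G X) :
    X.card ≤ Y.card := by
  have hpartner : ∀ x ∈ X, ∃ y, M.Adj x y := fun x hx =>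
    (hM (hv ▸ mem_coe.mpr (mem_union_left Y hx))).exists
  choose! p hp using hpartner
  refine card_le_card_of_injOn p (fun x hx => ?_) (fun x₁ hx₁ x₂ hx₂ heq => ?_)
  · have hpx : p x ∈ X ∪ Y := by rw [← mem_coe, ← hv]; exact (hp x hx).snd_mem
    exact (mem_union.mp hpx).resolve_left fun hpX => hX hx hpX (M.adj_sub (hp x hx))
  · exact hM.eq_of_adj_right (hp x₁ hx₁) (by rw [heq]; exact hp x₂ hx₂)

/-- G is square-stable iff for all S₁ ∈ Ω(G), S₂ ∈ Ω(G²), the induced subgraph on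
S₁ △ S₂ has a perfect matching. -/
theorem stmt9 [Fintype V] [DecidableEq V] (G : SimpleGraph V) :
    SquareStable G ↔
      ∀ S₁ S₂ : Finset V, IsMaxStable G S₁ → IsMaxStable (square G) S₂ →
        ∃ M : G.Subgraph, M.IsMatching ∧ M.verts = ↑((S₁ \ S₂) ∪ (S₂ \ S₁)) := by
  constructor
  · intro hsq S₁ S₂ hS₁ hS₂
    obtain ⟨g, hg⟩ := exists_matchedInto_sdiff hS₁ hS₂.1
    have hcard : (S₁ \ S₂).card ≤ (S₂ \ S₁).card :=
      (card_sdiff_comm (hS₁.2.trans (hsq.trans hS₂.2.symm))).le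
    obtain ⟨M, hM, hMv⟩ := hg.exists_isMatching disjoint_sdiff_sdiff.symm hcard
    exact ⟨M, hM, by rw [hMv, union_comm]⟩
  · intro h
    obtain ⟨S₁, hS₁⟩ := exists_isMaxStable G
    obtain ⟨S₂, hS₂⟩ := exists_isMaxStable (square G)
    obtain ⟨M, hM, hMv⟩ := h S₁ S₂ hS₁ hS₂
    have h₁ := hM.card_le_of_verts_eq_union hMv (hS₁.1.mono sdiff_subset)
    have h₂ := hM.card_le_of_verts_eq_union (hMv.trans (by rw [union_comm]))
      (hS₂.1.of_square.mono sdiff_subset)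
    rw [SquareStable, ← hS₁.2, ← hS₂.2]
    exact card_sdiff_eq_card_sdiff_iff.mp (le_antisymm h₁ h₂)
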